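/- arXiv:0907.3199 — 8 statements merged into one kernel-verified Lean document; each statement's English description precedes it below -/
import Mathlib

section
/- Let S be a finite set of cardinality n and let k' ≤ k ≤ n. There exists a surjective map ξ from the k-subsets of S to the k'-subsets of S with ξ(A) ⊆ A for all A, and such that every k'-subset has exactly λ preimages, if and only if C(n,k) = λ·C(n,k'). -/
/-!
Double counting the fibres of `ξ` gives `C(n,k) = l * C(n,k')`. Conversely, in the inclusion
graph between `k`-subsets and `k'`-subsets every `k`-subset has `C(k,k')` neighbours and every
`k'`-subset has `C(n-k',k-k')` of them, and `C(n,k) C(k,k') = C(n,k') C(n-k',k-k')` turns the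
hypothesis into `C(n-k',k-k') = l * C(k,k')`. Replacing each `k'`-subset by `l` copies makes the
graph regular, so by Hall's theorem it has a perfect matching, which is a sampling in which each
`k'`-subset is hit at most, hence exactly, `l` times.
-/

open Finset

namespace Finset

variable {ι α β : Type*}

theorem filter_subset_powersetCard_eq [DecidableEq α] {S A : Finset α} (hAS : A ⊆ S) (k : ℕ) :
    {B ∈ S.powersetCard k | B ⊆ A} = A.powersetCard k := by
  ext B
  simp only [mem_filter, mem_powersetCard]
  exact ⟨fun ⟨⟨_, hB⟩, hBA⟩ ↦ ⟨hBA, hB⟩, fun ⟨hBA, hB⟩ ↦ ⟨⟨hBA.trans hAS, hB⟩, hBA⟩⟩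

theorem exists_injOn_of_card_filter_mem_le [DecidableEq β] [Nonempty β] {s : Finset ι}
    (t : ι → Finset β) {d : ℕ} (hd : 0 < d) (ht : ∀ i ∈ s, d ≤ #(t i))
    (hdeg : ∀ b, #{i ∈ s | b ∈ t i} ≤ d) :
    ∃ f : ι → β, Set.InjOn f s ∧ ∀ i ∈ s, f i ∈ t i := by
  classical
  have hall : ∀ u : Finset s, #u ≤ #(u.biUnion (t ·)) := by
    intro u
    refine Nat.le_of_mul_le_mul_right
      (card_mul_le_card_mul (fun (i : s) b ↦ b ∈ t i) (fun i hi ↦ ?_) (fun b _ ↦ ?_)) hd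
    · rw [bipartiteAbove, filter_mem_eq_inter, inter_eq_right.2 (subset_biUnion_of_mem _ hi)]
      exact ht i i.2
    · refine (card_le_card_of_injOn Subtype.val (fun i hi ↦ ?_) Subtype.val_injective.injOn).trans
        (hdeg b)
      simp only [bipartiteBelow, coe_filter, Set.mem_ofPred_eq] at hi ⊢
      exact ⟨i.2, hi.2⟩
  obtain ⟨f, hf, hft⟩ := (all_card_le_biUnion_card_iff_exists_injective _).1 hall
  refine ⟨fun i ↦ if h : i ∈ s then f ⟨i, h⟩ else Classical.arbitrary β, ?_, fun i hi ↦ ?_⟩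
  · intro i hi j hj hij
    simp only [dif_pos (mem_coe.1 hi), dif_pos (mem_coe.1 hj)] at hij
    exact congrArg Subtype.val (hf hij)
  · simpa only [dif_pos hi] using hft ⟨i, hi⟩

theorem exists_card_fiber_eq_of_biregular [DecidableEq β] [Nonempty β] {s : Finset α}
    {t : Finset β} (r : α → β → Prop) [∀ a b, Decidable (r a b)] {l d : ℕ} (hl : 0 < l)
    (hd : 0 < d) (hs : ∀ a ∈ s, #(t.bipartiteAbove r a) = d)
    (ht : ∀ b ∈ t, #(s.bipartiteBelow r b) = l * d) :
    ∃ ξ : α → β, (∀ a ∈ s, ξ a ∈ t ∧ r a (ξ a)) ∧ ∀ b ∈ t, #{a ∈ s | ξ a = b} = l := by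
  have : Nonempty (β × Fin l) := ⟨(Classical.arbitrary β, ⟨0, hl⟩)⟩
  have hdeg : ∀ p : β × Fin l, #{a ∈ s | p ∈ t.bipartiteAbove r a ×ˢ univ} ≤ d * l := by
    rintro ⟨b, i⟩
    by_cases hb : b ∈ t
    · have : {a ∈ s | (b, i) ∈ t.bipartiteAbove r a ×ˢ univ} = s.bipartiteBelow r b := by
        ext a
        simp [bipartiteAbove, bipartiteBelow, hb]
      rw [this, ht b hb, mul_comm]
    · simp [bipartiteAbove, hb]
  -- match `s` into `l` copies of `t`
  obtain ⟨F, hFinj, hF⟩ := exists_injOn_of_card_filter_mem_le (s := s)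
    (fun a ↦ t.bipartiteAbove r a ×ˢ (univ : Finset (Fin l))) (Nat.mul_pos hd hl)
    (fun a ha ↦ by rw [card_product, hs a ha, card_univ, Fintype.card_fin]) hdeg
  have hξ : ∀ a ∈ s, (F a).1 ∈ t ∧ r a (F a).1 := fun a ha ↦ by
    simpa [bipartiteAbove] using (mem_product.1 (hF a ha)).1
  have hfiber_le : ∀ b ∈ t, #{a ∈ s | (F a).1 = b} ≤ l := fun b _ ↦ by
    simpa using card_le_card_of_injOn (t := (univ : Finset (Fin l))) (fun a ↦ (F a).2)
      (fun _ _ ↦ mem_coe.2 (mem_univ _)) fun a ha a' ha' h ↦ hFinj (mem_filter.1 ha).1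
        (mem_filter.1 ha').1 (Prod.ext ((mem_filter.1 ha).2.trans (mem_filter.1 ha').2.symm) h)
  have hcard : #s = l * #t :=
    Nat.eq_of_mul_eq_mul_right hd (by rw [card_mul_eq_card_mul r hs ht]; ring)
  refine ⟨fun a ↦ (F a).1, hξ, (sum_eq_sum_iff_of_le hfiber_le).1 ?_⟩
  rw [← card_eq_sum_card_fiberwise fun a ha ↦ (hξ a ha).1, sum_const, smul_eq_mul, hcard,
    mul_comm]

end Finset

/-- For a finite set `S` of cardinality `n` and `k' ≤ k ≤ n`, there exists a
regular `k'`-sampling of the `k`-subsets of `S` with redundancy `l` (a map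
`ξ` sending each `k`-subset to one of its `k'`-subsets such that every
`k'`-subset of `S` has exactly `l` preimages) if, and only if,
`C(n,k) = l * C(n,k')`. -/
theorem regular_sampling_iff {α : Type*} [DecidableEq α] (S : Finset α)
    (n k k' l : ℕ) (hS : S.card = n) (hk' : k' ≤ k) (hk : k ≤ n) :
    (∃ ξ : Finset α → Finset α,
        (∀ A ∈ S.powersetCard k, ξ A ⊆ A ∧ (ξ A).card = k') ∧
        (∀ B ∈ S.powersetCard k',
          ((S.powersetCard k).filter (fun A => ξ A = B)).card = l)) ↔
      n.choose k = l * n.choose k' := by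
  subst hS
  constructor
  · rintro ⟨ξ, hξ, hfiber⟩
    have hmaps : Set.MapsTo ξ (S.powersetCard k) (S.powersetCard k') := fun A hA ↦
      mem_powersetCard.2 ⟨(hξ A hA).1.trans (mem_powersetCard.1 hA).1, (hξ A hA).2⟩
    rw [← card_powersetCard, ← card_powersetCard, card_eq_sum_card_fiberwise hmaps,
      sum_congr rfl hfiber, sum_const, smul_eq_mul, mul_comm]
  · intro h
    have hl : 0 < l := Nat.pos_of_mul_pos_right (h ▸ Nat.choose_pos hk)
    have hsupersets : (#S - k').choose (k - k') = l * k.choose k' :=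
      Nat.eq_of_mul_eq_mul_left (Nat.choose_pos (hk'.trans hk))
        (by rw [← Nat.choose_mul hk', h]; ring)
    obtain ⟨ξ, hξ, hfiber⟩ := exists_card_fiber_eq_of_biregular (s := S.powersetCard k)
      (t := S.powersetCard k') (fun A B ↦ B ⊆ A) hl (Nat.choose_pos hk')
      (fun A hA ↦ by
        rw [bipartiteAbove, filter_subset_powersetCard_eq (mem_powersetCard.1 hA).1,
          card_powersetCard, (mem_powersetCard.1 hA).2])
      (fun B hB ↦ by
        rw [bipartiteBelow, card_filter_powersetCard_subset _ _ _ (mem_powersetCard.1 hB).1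
          ((mem_powersetCard.1 hB).2.trans_le hk'), (mem_powersetCard.1 hB).2, hsupersets])
    exact ⟨ξ, fun A hA ↦ ⟨(hξ A hA).2, (mem_powersetCard.1 (hξ A hA).1).2⟩, hfiber⟩
end

section
/- Let S be a finite set with |S| = n and let k ≤ ⌊n/2⌋. Then there exists a bijection ξ from the (n−k)-subsets of S to the k-subsets of S such that ξ(A) ⊆ A for every (n−k)-subset A. -/
/-!
Join an `(n - k)`-set `A` to a `k`-set `B` when `B ⊆ A`. Every `A` lies above `C(n - k, k)`
sets `B`, and every `B` lies below `C(n - k, n - 2k) = C(n - k, k)` sets `A`, so the inclusion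
graph is regular and double counting gives Hall's condition. The resulting matching is
injective between two families of the same size `C(n, k)`, hence a bijection.
-/

open Finset Function

theorem Fintype.exists_injective_of_degree_le {α β : Type*} [Fintype α] [Fintype β]
    (r : α → β → Prop) [DecidableRel r] {d : ℕ} (hd : 0 < d)
    (hα : ∀ a, d ≤ #{b | r a b}) (hβ : ∀ b, #{a | r a b} ≤ d) :
    ∃ f : α → β, Injective f ∧ ∀ a, r a (f a) := by
  refine (Fintype.all_card_le_filter_rel_iff_exists_injective r).1 fun s => ?_
  set t : Finset β := {b | ∃ a ∈ s, r a b}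
  refine Nat.le_of_mul_le_mul_right (card_mul_le_card_mul r (m := d) (n := d) ?_ ?_) hd
  · intro a ha
    refine (hα a).trans (card_le_card fun b hb => ?_)
    have hab : r a b := (mem_filter.1 hb).2
    exact (mem_bipartiteAbove r).2 ⟨mem_filter.2 ⟨mem_univ b, a, ha, hab⟩, hab⟩
  · intro b _
    refine (card_le_card fun a ha => ?_).trans (hβ b)
    exact mem_filter.2 ⟨mem_univ a, ((mem_bipartiteBelow r).1 ha).2⟩

theorem Fintype.exists_equiv_of_degree_le {α β : Type*} [Fintype α] [Fintype β]
    (r : α → β → Prop) [DecidableRel r] {d : ℕ} (hd : 0 < d)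
    (hα : ∀ a, d ≤ #{b | r a b}) (hβ : ∀ b, #{a | r a b} ≤ d)
    (hcard : Fintype.card α = Fintype.card β) :
    ∃ e : α ≃ β, ∀ a, r a (e a) := by
  obtain ⟨f, hf, hrf⟩ := exists_injective_of_degree_le r hd hα hβ
  exact ⟨.ofBijective f ((bijective_iff_injective_and_card f).2 ⟨hf, hcard⟩), hrf⟩

namespace Finset

variable {α : Type*} [DecidableEq α] {S : Finset α}

theorem card_filter_subset_of_mem_powersetCard {A : Finset α} {j : ℕ}
    (hA : A ∈ S.powersetCard j) (k : ℕ) :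
    #{B : S.powersetCard k | (B : Finset α) ⊆ A} = j.choose k := by
  obtain ⟨hAS, rfl⟩ := mem_powersetCard.1 hA
  have hfilter : (S.powersetCard k).filter (· ⊆ A) = A.powersetCard k := by
    ext B
    simp only [mem_filter, mem_powersetCard]
    exact ⟨fun h => ⟨h.2, h.1.2⟩, fun h => ⟨⟨h.1.trans hAS, h.2⟩, h.1⟩⟩
  rw [univ_eq_attach, filter_attach (· ⊆ A), card_map, card_attach, hfilter, card_powersetCard]

theorem card_filter_superset_of_mem_powersetCard {B : Finset α} {k : ℕ}
    (hB : B ∈ S.powersetCard k) {j : ℕ} (hkj : k ≤ j) :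
    #{A : S.powersetCard j | B ⊆ (A : Finset α)} = (#S - k).choose (j - k) := by
  obtain ⟨hBS, rfl⟩ := mem_powersetCard.1 hB
  rw [univ_eq_attach, filter_attach (B ⊆ ·), card_map, card_attach,
    card_filter_powersetCard_subset B S j hBS hkj]

end Finset

/-- For a finite set `S` with `|S| = n` and `k ≤ ⌊n/2⌋`, there is a bijection
`ξ` from the `(n-k)`-subsets of `S` to the `k`-subsets of `S` such that
`ξ A ⊆ A` for every `(n-k)`-subset `A`. -/
theorem bijective_sampling_complement {α : Type*} [DecidableEq α]
    (S : Finset α) (n k : ℕ) (hS : S.card = n) (hk : k ≤ n / 2) :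
    ∃ ξ : {A // A ∈ S.powersetCard (n - k)} ≃ {B // B ∈ S.powersetCard k},
      ∀ A : {A // A ∈ S.powersetCard (n - k)}, (ξ A : Finset α) ⊆ (A : Finset α) := by
  have hkn : k ≤ n - k := by omega
  refine Fintype.exists_equiv_of_degree_le
    (fun (A : S.powersetCard (n - k)) (B : S.powersetCard k) => (B : Finset α) ⊆ A)
    (Nat.choose_pos hkn) (fun A => ?_) (fun B => ?_) ?_
  · rw [card_filter_subset_of_mem_powersetCard A.2]
  · rw [card_filter_superset_of_mem_powersetCard B.2 hkn, hS, Nat.choose_symm hkn]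
  · rw [Fintype.card_coe, Fintype.card_coe, card_powersetCard, card_powersetCard, hS,
      Nat.choose_symm (by omega)]
end

section
/- Let S be a finite set with |S| = n, and let k' ≤ k ≤ n with C(n,k) = λ·C(n,k'). Then there exists an injective map ψ from the multiset consisting of λ copies of each k'-subset of S into the k-subsets of S such that each k'-subset is mapped (in each of its λ copies) to a k-subset containing it, and ψ is bijective onto the k-subsets. -/
/-!
Join `x = (i, B)` to every `k`-subset `A ⊇ B`. Every `x` has `C(n - k', k - k')` neighbours and
every `A` has `l · C(k, k')` neighbours, and these two numbers agree because
`C(n, k) C(k, k') = C(n, k') C(n - k', k - k')`. In a bipartite graph whose left degrees are at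
least its right degrees, double counting gives Hall's condition, so there is a matching of the
left side into the right side; the two sides have the same size `l · C(n, k') = C(n, k)`, so the
matching is a bijection.
-/

open Finset

namespace Fintype

variable {ι τ : Type*} [Fintype ι] [Fintype τ] (r : ι → τ → Prop) [DecidableRel r] {d : ℕ}

theorem exists_injective_of_degree_bounds (hd : 0 < d) (hleft : ∀ x, d ≤ #{y | r x y})
    (hright : ∀ y, #{x | r x y} ≤ d) : ∃ f : ι → τ, Function.Injective f ∧ ∀ x, r x (f x) := by
  refine (all_card_le_filter_rel_iff_exists_injective r).1 fun s => ?_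
  set t : Finset τ := {y | ∃ x ∈ s, r x y}
  refine Nat.le_of_mul_le_mul_right (card_mul_le_card_mul r (s := s) (t := t) ?_ ?_) hd
  · intro x hx
    refine (hleft x).trans (card_le_card fun y hy => ?_)
    rw [mem_filter_univ] at hy
    exact (mem_bipartiteAbove r).2 ⟨(mem_filter_univ y).2 ⟨x, hx, hy⟩, hy⟩
  · exact fun y _ => (card_le_card (filter_subset_filter _ (subset_univ s))).trans (hright y)

theorem exists_equiv_of_degree_bounds (hd : 0 < d) (hleft : ∀ x, d ≤ #{y | r x y})
    (hright : ∀ y, #{x | r x y} ≤ d) (hcard : card ι = card τ) :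
    ∃ e : ι ≃ τ, ∀ x, r x (e x) := by
  obtain ⟨f, hf, hrf⟩ := exists_injective_of_degree_bounds r hd hleft hright
  exact ⟨.ofBijective f ((bijective_iff_injective_and_card f).2 ⟨hf, hcard⟩), hrf⟩

end Fintype

theorem Nat.choose_sub_eq_mul_choose {n k k' l : ℕ} (hk' : k' ≤ k) (hn : k' ≤ n)
    (h : n.choose k = l * n.choose k') : (n - k').choose (k - k') = l * k.choose k' := by
  refine Nat.eq_of_mul_eq_mul_left (Nat.choose_pos hn) ?_
  rw [← Nat.choose_mul hk', h]
  ring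

namespace Finset

variable {α : Type*}

theorem card_filter_univ_subtype (s : Finset α) (p : α → Prop) [DecidablePred p] :
    #{x : s | p x} = #{x ∈ s | p x} := by
  rw [univ_eq_attach, filter_attach, card_map, card_attach]

variable [DecidableEq α] {S : Finset α} {k k' : ℕ}

theorem filter_powersetCard_subset_eq_powersetCard {A : Finset α} (hA : A ⊆ S) :
    {B ∈ S.powersetCard k' | B ⊆ A} = A.powersetCard k' := by
  ext B
  simp only [mem_filter, mem_powersetCard]
  exact ⟨fun ⟨⟨_, hB⟩, hBA⟩ => ⟨hBA, hB⟩, fun ⟨hBA, hB⟩ => ⟨⟨hBA.trans hA, hB⟩, hBA⟩⟩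

theorem card_supersets_mem_powersetCard (hk' : k' ≤ k) (B : S.powersetCard k') :
    #{A : S.powersetCard k | (B : Finset α) ⊆ A} = (#S - k').choose (k - k') := by
  obtain ⟨hBS, hB⟩ := mem_powersetCard.1 B.2
  rw [card_filter_univ_subtype, card_filter_powersetCard_subset _ _ _ hBS (hB.trans_le hk'), hB]

theorem card_copies_subsets_mem_powersetCard (l : ℕ) (A : S.powersetCard k) :
    #{x : Fin l × S.powersetCard k' | (x.2 : Finset α) ⊆ A} = l * k.choose k' := by
  obtain ⟨hAS, hA⟩ := mem_powersetCard.1 A.2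
  rw [← univ_product_univ, filter_product_right fun B : S.powersetCard k' => (B : Finset α) ⊆ A,
    card_product, card_univ, Fintype.card_fin, card_filter_univ_subtype _ (· ⊆ (A : Finset α)),
    filter_powersetCard_subset_eq_powersetCard hAS, card_powersetCard, hA]

end Finset

/-- If `C(n,k) = l * C(n,k')` with `k' ≤ k ≤ n` and `|S| = n`, then there is a
bijection `ψ` from `l` disjoint copies of the `k'`-subsets of `S` onto the
`k`-subsets of `S` sending each copy of a `k'`-subset to a `k`-subset
containing it. -/
theorem bijective_multiembedding {α : Type*} [DecidableEq α] (S : Finset α)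
    (n k k' l : ℕ) (hS : S.card = n) (hk' : k' ≤ k) (hk : k ≤ n)
    (h : n.choose k = l * n.choose k') :
    ∃ ψ : (Fin l × {B // B ∈ S.powersetCard k'}) ≃ {A // A ∈ S.powersetCard k},
      ∀ (i : Fin l) (B : {B // B ∈ S.powersetCard k'}),
        (B : Finset α) ⊆ (ψ (i, B) : Finset α) := by
  subst hS
  have hdeg := Nat.choose_sub_eq_mul_choose hk' (hk'.trans hk) h
  obtain ⟨ψ, hψ⟩ := Fintype.exists_equiv_of_degree_bounds
    (fun (x : Fin l × S.powersetCard k') (A : S.powersetCard k) => (x.2 : Finset α) ⊆ A)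
    (Nat.choose_pos (Nat.sub_le_sub_right hk k'))
    (fun x => (card_supersets_mem_powersetCard hk' x.2).ge)
    (fun A => ((card_copies_subsets_mem_powersetCard l A).trans hdeg.symm).le)
    (by simp only [Fintype.card_prod, Fintype.card_fin, Fintype.card_coe, card_powersetCard, h])
  exact ⟨ψ, fun i B => hψ (i, B)⟩
end

section
/- Let S be a finite set of cardinality n with n ≡ 2 (mod 3) and n ≥ 3. Then there exists a map ξ from the 3-subsets of S to the 2-subsets of S with ξ(A) ⊆ A for every 3-subset A, such that every 2-subset of S has exactly (n−2)/3 preimages. -/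
/-!
Order `S` (any injection into a linear order will do) and let `ξ A` drop from a triple `A` the
element whose rank inside `A` is the sum of the ranks in `S` of the elements of `A`, reduced
mod `3`. For a pair `B = {x, y}` and a third element `z`, the rank of `z` inside `insert z B`
is the number of elements of `B` below `z`, and its rank in `S` is that number plus its rank
`t` in `S \ B`. Hence `ξ (insert z B) = B` iff `t + rank x + rank y ≡ 0 (mod 3)`, and as `z`
runs over `S \ B`, `t` runs over `0, …, n - 3`, which contains exactly `(n - 2) / 3` terms of
each residue class. The same argument samples the `k`-subsets by the `(k + 1)`-subsets
whenever `k + 1 ∣ n - k`.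
-/

open Finset Function

theorem eq_add_mod_iff_modEq_zero {x y m : ℕ} (hx : x < m) :
    x = (x + y) % m ↔ y ≡ 0 [MOD m] := by
  calc x = (x + y) % m ↔ x + 0 ≡ x + y [MOD m] := by
        rw [Nat.ModEq, add_zero, Nat.mod_eq_of_lt hx]
    _ ↔ 0 ≡ y [MOD m] := ⟨Nat.ModEq.add_left_cancel' x, Nat.ModEq.add_left x⟩
    _ ↔ y ≡ 0 [MOD m] := Nat.ModEq.comm

theorem card_filter_range_add_modEq_zero {m q : ℕ} (hm : 0 < m) (c : ℕ) :
    #{t ∈ range (m * q) | t + c ≡ 0 [MOD m]} = q := by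
  -- `m * c - c` represents `-c` modulo `m` without truncated subtraction.
  have hshift : ∀ t, t + c ≡ 0 [MOD m] ↔ t ≡ m * c - c [MOD m] := by
    have hc : m * c - c + c ≡ 0 [MOD m] := by
      rw [Nat.sub_add_cancel (Nat.le_mul_of_pos_left c hm)]
      exact (Nat.modEq_zero_iff_dvd).2 (dvd_mul_right m c)
    exact fun t => ⟨fun h => Nat.ModEq.add_right_cancel' c (h.trans hc.symm),
      fun h => (Nat.ModEq.add_right c h).trans hc⟩
  simp_rw [hshift, ← Nat.count_eq_card_filter_range, Nat.count_modEq_card _ hm,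
    Nat.mul_mod_right, Nat.not_lt_zero, if_false, add_zero, Nat.mul_div_cancel_left q hm]

theorem card_filter_powersetCard_eq {α : Type*} [DecidableEq α] {ξ : Finset α → Finset α}
    (hξ : ∀ A, ξ A ⊆ A) {S B : Finset α} (hB : B ⊆ S) :
    #{A ∈ S.powersetCard (#B + 1) | ξ A = B} = #{z ∈ S \ B | ξ (insert z B) = B} := by
  symm
  refine card_nbij (insert · B) ?_ ?_ ?_
  · intro z hz
    simp only [coe_filter, mem_sdiff, Set.mem_ofPred_eq, mem_powersetCard] at hz ⊢
    exact ⟨⟨insert_subset hz.1.1 hB, card_insert_of_notMem hz.1.2⟩, hz.2⟩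
  · intro a ha b _ hab
    exact (insert_inj (mem_sdiff.1 (mem_filter.1 ha).1).2).1 hab
  · intro A hA
    simp only [coe_filter, mem_powersetCard, Set.mem_ofPred_eq] at hA
    obtain ⟨⟨hAS, hAcard⟩, hξA⟩ := hA
    obtain ⟨z, hzB, rfl⟩ := exists_eq_insert_iff.2 ⟨hξA ▸ hξ A, hAcard.symm⟩
    exact ⟨z, by simpa [hzB, hξA] using hAS (mem_insert_self z B), rfl⟩

section RankSumSample

variable {α β : Type*} [LinearOrder β] (r : α → β)

def rankIn (T : Finset α) (a : α) : ℕ := #{b ∈ T | r b < r a}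

section Rank

variable {r} {T : Finset α} {a b : α}

theorem rankIn_lt_card (ha : a ∈ T) : rankIn r T a < #T :=
  card_lt_card (filter_ssubset.2 ⟨a, ha, lt_irrefl _⟩)

theorem rankIn_lt_rankIn (ha : a ∈ T) (hab : r a < r b) : rankIn r T a < rankIn r T b := by
  refine card_lt_card ((ssubset_iff_of_subset ?_).2 ⟨a, ?_, ?_⟩)
  · intro c
    simp only [mem_filter]
    exact fun hc => ⟨hc.1, hc.2.trans hab⟩
  · exact mem_filter.2 ⟨ha, hab⟩
  · simp

theorem injOn_rankIn (hr : Injective r) : Set.InjOn (rankIn r T) T := by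
  intro a ha b hb hab
  rcases lt_trichotomy (r a) (r b) with h | h | h
  · exact absurd hab (rankIn_lt_rankIn ha h).ne
  · exact hr h
  · exact absurd hab (rankIn_lt_rankIn hb h).ne'

theorem image_rankIn (hr : Injective r) : T.image (rankIn r T) = range #T := by
  refine eq_of_subset_of_card_le (fun t ht => ?_) ?_
  · obtain ⟨a, ha, rfl⟩ := mem_image.1 ht
    exact mem_range.2 (rankIn_lt_card ha)
  · rw [card_image_of_injOn (injOn_rankIn hr), card_range]

theorem card_filter_rankIn (hr : Injective r) (P : ℕ → Prop) [DecidablePred P] :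
    #{a ∈ T | P (rankIn r T a)} = #{t ∈ range #T | P t} := by
  rw [← image_rankIn hr, filter_image, card_image_of_injOn ((injOn_rankIn hr).mono
    (coe_subset.2 (filter_subset _ _)))]

theorem rankIn_sdiff_add_rankIn [DecidableEq α] {S B : Finset α} (hB : B ⊆ S) :
    rankIn r (S \ B) a + rankIn r B a = rankIn r S a := by
  simp only [rankIn, card_filter]
  exact sum_sdiff hB

theorem rankIn_insert_self [DecidableEq α] (B : Finset α) :
    rankIn r (insert a B) a = rankIn r B a := by
  simp only [rankIn, filter_insert, lt_irrefl, if_false]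

end Rank

def rankSumSample (S A : Finset α) : Finset α :=
  {a ∈ A | rankIn r A a ≠ (∑ b ∈ A, rankIn r S b) % #A}

section Sample

variable {r} {S A B : Finset α} {z : α}

theorem rankSumSample_subset : rankSumSample r S A ⊆ A := filter_subset _ _

theorem card_rankSumSample (hr : Injective r) (hA : A.Nonempty) :
    #(rankSumSample r S A) = #A - 1 := by
  rw [rankSumSample]
  set s := (∑ b ∈ A, rankIn r S b) % #A
  have hs : s < #A := Nat.mod_lt _ hA.card_pos
  have hdrop : #{a ∈ A | rankIn r A a = s} = 1 := by
    rw [card_filter_rankIn hr (· = s), filter_eq' _ s, if_pos (mem_range.2 hs), card_singleton]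
  have := card_filter_add_card_filter_not (s := A) (fun a => rankIn r A a = s)
  simp only [ne_eq]
  omega

variable [DecidableEq α]

theorem rankSumSample_eq_erase_iff (hr : Injective r) (hz : z ∈ A) :
    rankSumSample r S A = A.erase z ↔ rankIn r A z = (∑ b ∈ A, rankIn r S b) % #A := by
  constructor
  · intro h
    have hz' : z ∉ rankSumSample r S A := h ▸ notMem_erase z A
    simpa [rankSumSample, hz] using hz'
  · intro h
    refine eq_of_subset_of_card_le (subset_erase.2 ⟨rankSumSample_subset, ?_⟩) ?_
    · simp [rankSumSample, h]
    · rw [card_rankSumSample hr ⟨z, hz⟩, card_erase_of_mem hz]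

theorem rankSumSample_insert_eq_iff (hr : Injective r) (hB : B ⊆ S) (hz : z ∈ S \ B) :
    rankSumSample r S (insert z B) = B ↔
      rankIn r (S \ B) z + ∑ b ∈ B, rankIn r S b ≡ 0 [MOD #B + 1] := by
  have hzB : z ∉ B := (mem_sdiff.1 hz).2
  have hlt : rankIn r B z < #B + 1 := Nat.lt_succ_of_le (card_le_card (filter_subset _ _))
  conv_lhs => rhs; rw [← erase_insert hzB]
  rw [rankSumSample_eq_erase_iff hr (mem_insert_self z B), rankIn_insert_self,
    sum_insert hzB, card_insert_of_notMem hzB, ← rankIn_sdiff_add_rankIn hB,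
    add_comm _ (rankIn r B z), add_assoc, eq_add_mod_iff_modEq_zero hlt]

end Sample

theorem card_filter_rankSumSample_eq [DecidableEq α] (hr : Injective r) {S B : Finset α}
    (hB : B ⊆ S) (hdvd : #B + 1 ∣ #S - #B) :
    #{A ∈ S.powersetCard (#B + 1) | rankSumSample r S A = B} = (#S - #B) / (#B + 1) := by
  obtain ⟨q, hq⟩ := hdvd
  rw [card_filter_powersetCard_eq (fun _ => rankSumSample_subset) hB,
    filter_congr fun z hz => rankSumSample_insert_eq_iff hr hB hz, card_filter_rankIn hr
      (fun t => t + ∑ b ∈ B, rankIn r S b ≡ 0 [MOD #B + 1]), card_sdiff_of_subset hB, hq,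
    card_filter_range_add_modEq_zero (Nat.succ_pos _), Nat.mul_div_cancel_left q (Nat.succ_pos _)]

end RankSumSample

theorem regular_two_sampling_of_triples_general {α : Type*} [DecidableEq α]
    (S : Finset α) (n : ℕ) (hS : S.card = n) (hn : n % 3 = 2) :
    ∃ ξ : Finset α → Finset α,
      (∀ A ∈ S.powersetCard 3, ξ A ⊆ A ∧ (ξ A).card = 2) ∧
      (∀ B ∈ S.powersetCard 2,
        ((S.powersetCard 3).filter (fun A => ξ A = B)).card = (n - 2) / 3) := by
  -- `α` carries no order: rank the elements of `S` through an injection into the cardinals.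
  have hr : Injective (embeddingToCardinal : α ↪ Cardinal) := embeddingToCardinal.injective
  refine ⟨rankSumSample embeddingToCardinal S, fun A hA => ?_, fun B hB => ?_⟩
  · have hA3 := (mem_powersetCard.1 hA).2
    exact ⟨rankSumSample_subset,
      by rw [card_rankSumSample hr (card_pos.1 (by omega)), hA3]⟩
  · obtain ⟨hBS, hB2⟩ := mem_powersetCard.1 hB
    have h := card_filter_rankSumSample_eq _ hr hBS (by rw [hB2, hS]; omega)
    rwa [hB2, hS] at h

/-- If `|S| = n` with `n ≡ 2 (mod 3)` and `n ≥ 3`, then there is a map `ξ`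
from the `3`-subsets of `S` to the `2`-subsets of `S` with `ξ A ⊆ A`, such
that every `2`-subset of `S` has exactly `(n-2)/3` preimages. -/
theorem regular_two_sampling_of_triples {α : Type*} [DecidableEq α]
    (S : Finset α) (n : ℕ) (hS : S.card = n) (hn : n % 3 = 2) (hn3 : 3 ≤ n) :
    ∃ ξ : Finset α → Finset α,
      (∀ A ∈ S.powersetCard 3, ξ A ⊆ A ∧ (ξ A).card = 2) ∧
      (∀ B ∈ S.powersetCard 2,
        ((S.powersetCard 3).filter (fun A => ξ A = B)).card = (n - 2) / 3) :=
  regular_two_sampling_of_triples_general S n hS hn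
end

section
/- If there exists a regular k₁-sampling ξ₁ of the k-subsets of S with redundancy λ₁, and a regular k₂-sampling ξ₂ of the k₁-subsets of S with redundancy λ₂, then the composition ξ₂ ∘ ξ₁ is a regular k₂-sampling of the k-subsets of S with redundancy λ₁·λ₂. -/
/-! Every `k`-subset sent by `ξ₂ ∘ ξ₁` to a given `k₂`-subset `C` passes through exactly one
`k₁`-subset `B = ξ₁ A` with `ξ₂ B = C`; there are `l₂` such `B`, each reached from `l₁` sets `A`. -/

open Finset

theorem Finset.card_filter_comp_eq_mul {α β γ : Type*} [DecidableEq β] [DecidableEq γ]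
    {s : Finset α} {t : Finset β} {u : Finset γ} {f : α → β} {g : β → γ} {l₁ l₂ : ℕ}
    (hf : Set.MapsTo f s t) (hf_reg : ∀ b ∈ t, #{a ∈ s | f a = b} = l₁)
    (hg_reg : ∀ c ∈ u, #{b ∈ t | g b = c} = l₂) :
    ∀ c ∈ u, #{a ∈ s | g (f a) = c} = l₁ * l₂ := by
  intro c hc
  have hmaps : Set.MapsTo f ({a ∈ s | g (f a) = c} : Finset α) ({b ∈ t | g b = c} : Finset β) :=
    fun a ha => by
      rw [mem_coe, mem_filter] at ha ⊢
      exact ⟨hf ha.1, ha.2⟩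
  have hfiber : ∀ b ∈ {b ∈ t | g b = c},
      #{a ∈ {a ∈ s | g (f a) = c} | f a = b} = l₁ := by
    intro b hb
    rw [mem_filter] at hb
    rw [filter_filter, ← hf_reg b hb.1]
    congr 1
    exact filter_congr fun a _ => ⟨And.right, fun hab => ⟨hab ▸ hb.2, hab⟩⟩
  rw [card_eq_sum_card_fiberwise hmaps, sum_congr rfl hfiber, sum_const, hg_reg c hc,
    smul_eq_mul, mul_comm]

section Sampling

variable {α : Type*} [DecidableEq α]

def IsRegularSampling (S : Finset α) (k k' l : ℕ) (ξ : Finset α → Finset α) : Prop :=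
  (∀ A ∈ S.powersetCard k, ξ A ⊆ A ∧ (ξ A).card = k') ∧
    ∀ C ∈ S.powersetCard k', ((S.powersetCard k).filter (fun A => ξ A = C)).card = l

theorem IsRegularSampling.mapsTo {S : Finset α} {k k' l : ℕ} {ξ : Finset α → Finset α}
    (hξ : IsRegularSampling S k k' l ξ) :
    Set.MapsTo ξ (S.powersetCard k) (S.powersetCard k') := fun A hA => by
  rw [mem_coe, mem_powersetCard] at hA ⊢
  have hsub := hξ.1 A (mem_powersetCard.2 hA)
  exact ⟨hsub.1.trans hA.1, hsub.2⟩

theorem IsRegularSampling.comp {S : Finset α} {k k₁ k₂ l₁ l₂ : ℕ}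
    {ξ₁ ξ₂ : Finset α → Finset α} (h₁ : IsRegularSampling S k k₁ l₁ ξ₁)
    (h₂ : IsRegularSampling S k₁ k₂ l₂ ξ₂) :
    IsRegularSampling S k k₂ (l₁ * l₂) (ξ₂ ∘ ξ₁) := by
  refine ⟨fun A hA => ?_, card_filter_comp_eq_mul (f := ξ₁) (g := ξ₂) h₁.mapsTo h₁.2 h₂.2⟩
  obtain ⟨hB_sub, -⟩ := h₁.1 A hA
  obtain ⟨hC_sub, hC_card⟩ := h₂.1 (ξ₁ A) (h₁.mapsTo hA)
  exact ⟨hC_sub.trans hB_sub, hC_card⟩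

end Sampling

/-- Composition of regular samplings: a regular `k₁`-sampling of the
`k`-subsets with redundancy `l₁` composed with a regular `k₂`-sampling of the
`k₁`-subsets with redundancy `l₂` is a regular `k₂`-sampling of the
`k`-subsets with redundancy `l₁ * l₂`. -/
theorem sampling_composition {α : Type*} [DecidableEq α] (S : Finset α)
    (k k₁ k₂ l₁ l₂ : ℕ)
    (ξ₁ ξ₂ : Finset α → Finset α)
    (h₁sub : ∀ A ∈ S.powersetCard k, ξ₁ A ⊆ A ∧ (ξ₁ A).card = k₁)
    (h₁reg : ∀ B ∈ S.powersetCard k₁,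
      ((S.powersetCard k).filter (fun A => ξ₁ A = B)).card = l₁)
    (h₂sub : ∀ B ∈ S.powersetCard k₁, ξ₂ B ⊆ B ∧ (ξ₂ B).card = k₂)
    (h₂reg : ∀ C ∈ S.powersetCard k₂,
      ((S.powersetCard k₁).filter (fun B => ξ₂ B = C)).card = l₂) :
    (∀ A ∈ S.powersetCard k, ξ₂ (ξ₁ A) ⊆ A ∧ (ξ₂ (ξ₁ A)).card = k₂) ∧
    (∀ C ∈ S.powersetCard k₂,
      ((S.powersetCard k).filter (fun A => ξ₂ (ξ₁ A) = C)).card = l₁ * l₂) :=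
  IsRegularSampling.comp ⟨h₁sub, h₁reg⟩ ⟨h₂sub, h₂reg⟩
end

section
/- Let Δ be a finite bipartite graph with parts A and B such that every vertex of A has degree d and every vertex of B has degree e, with d, e > 0 and |A| > |B|, and set r = |A| − |B|. If d > (r−1)(e−1)/r, then there exists a surjection ξ: A → B such that every element of B has either one or two preimages under ξ, and ξ(a) is adjacent to a for every a ∈ A. -/
/-!
Double the vertex set of `B` and add `2|B| - |A|` dummy vertices to `A`, each joined to every
vertex of the second copy of `B`, while a vertex of `A` is joined to both copies of each of its
neighbours. A perfect matching of this bipartite graph sends each vertex of `A` to a neighbour and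
uses the first copy of every vertex of `B` exactly once, which is the required surjection.
Hall's condition for it reduces to `|S| ≤ 2|N(S)|` and `|S| - |N(S)| ≤ |A| - |B|` for `S ⊆ A`, and
both follow from the double-counting bound `d|S| ≤ e|N(S)|` once `(|B| + r) d = |B| e` and
`r ≤ |B|`; the latter is where `r d > (r - 1)(e - 1)` enters.
-/

open Finset Function

theorem le_of_add_mul_eq_mul {m r d e : ℕ} (hcount : (m + r) * d = m * e)
    (hdeg : (r - 1) * (e - 1) < r * d) : r ≤ m := by
  obtain ⟨hr, hd⟩ := CanonicallyOrderedAdd.mul_pos.mp (Nat.zero_lt_of_lt hdeg)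
  have he : 0 < e := Nat.pos_of_ne_zero fun h => by simp [h] at hcount; omega
  by_contra! h
  zify [hr, he, h.le] at hcount hdeg h hd
  nlinarith

theorem le_two_mul_of_mul_le {a m d e s t : ℕ} (hd : 0 < d) (hcount : a * d = m * e)
    (ha : a ≤ 2 * m) (ht : t ≤ m) (hst : s * d ≤ t * e) : s ≤ 2 * t := by
  have hte : m * (t * e) ≤ m * (2 * t * d) :=
    calc m * (t * e) = t * (a * d) := by rw [hcount]; ring
      _ ≤ t * (2 * m * d) := by gcongr
      _ = m * (2 * t * d) := by ring
  rcases Nat.eq_zero_or_pos m with rfl | hm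
  · nlinarith
  · nlinarith [Nat.le_of_mul_le_mul_left hte hm]

theorem add_le_add_of_mul_le {a m d e s t : ℕ} (hd : 0 < d) (hcount : a * d = m * e)
    (hma : m ≤ a) (ht : t ≤ m) (hst : s * d ≤ t * e) : s + m ≤ t + a := by
  rcases Nat.eq_zero_or_pos m with rfl | hm
  · nlinarith
  have key : t * ((a - m) * d) ≤ m * ((a - m) * d) := Nat.mul_le_mul_right _ ht
  zify [hma] at key hcount hst hm hd ⊢
  refine le_of_mul_le_mul_right ?_ (mul_pos hm hd)
  nlinarith

theorem card_fst_comp_fiber_le_two {A B : Type*} [Fintype A] [DecidableEq B] {g : A → B × Bool}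
    (hg : Injective g) (b : B) : #{a | (g a).1 = b} ≤ 2 :=
  card_le_card_of_injOn (fun a => (g a).2) (fun _ _ => mem_univ _)
    (fun _ h₁ _ h₂ h => hg (Prod.ext ((mem_filter.mp h₁).2.trans (mem_filter.mp h₂).2.symm) h))

section

variable {A B : Type*} [Fintype A] [Fintype B] {adj : A → B → Prop} [∀ a b, Decidable (adj a b)]

theorem card_mul_le_card_neighbors_mul {d e : ℕ} (hdegA : ∀ a, d ≤ #{b | adj a b})
    (hdegB : ∀ b, #{a | adj a b} ≤ e) (S : Finset A) :
    #S * d ≤ #{b | ∃ a ∈ S, adj a b} * e := by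
  refine card_mul_le_card_mul adj (fun a ha => (hdegA a).trans (card_le_card ?_))
    (fun b _ => (card_le_card ?_).trans (hdegB b))
  · intro b hb
    simp only [mem_filter, mem_univ, true_and] at hb
    simp only [bipartiteAbove, mem_filter, mem_univ, true_and]
    exact ⟨⟨a, ha, hb⟩, hb⟩
  · exact filter_subset_filter _ (subset_univ S)

theorem card_mul_eq_card_mul_of_degrees {d e : ℕ} (hdegA : ∀ a, #{b | adj a b} = d)
    (hdegB : ∀ b, #{a | adj a b} = e) : Fintype.card A * d = Fintype.card B * e :=
  card_mul_eq_card_mul adj (fun a _ => hdegA a) (fun b _ => hdegB b)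

def dummyAdj (adj : A → B → Prop) (D : Type*) : A ⊕ D → B × Bool → Prop
  | .inl a, p => adj a p.1
  | .inr _, p => p.2

theorem card_le_card_dummyAdj_neighbors {D : Type*} [Fintype D]
    (hD : Fintype.card A + Fintype.card D = 2 * Fintype.card B)
    (hall₂ : ∀ S : Finset A, #S ≤ 2 * #{b | ∃ a ∈ S, adj a b})
    (hall₁ : ∀ S : Finset A, #S + Fintype.card B ≤ #{b | ∃ a ∈ S, adj a b} + Fintype.card A)
    [DecidableRel (dummyAdj adj D)] (s : Finset (A ⊕ D)) :
    #s ≤ #{p | ∃ x ∈ s, dummyAdj adj D x p} := by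
  classical
  have h₂ := hall₂ s.toLeft
  have h₁ := hall₁ s.toLeft
  have hT : ({b | ∃ a ∈ s.toLeft, adj a b} : Finset B) ×ˢ univ ⊆
      ({p | ∃ x ∈ s, dummyAdj adj D x p} : Finset _) := by
    intro p hp
    simp only [mem_product, mem_filter, mem_univ, true_and, mem_toLeft] at hp ⊢
    obtain ⟨a, ha, hab⟩ := hp.1
    exact ⟨.inl a, ha, hab⟩
  generalize ({b | ∃ a ∈ s.toLeft, adj a b} : Finset B) = T at h₁ h₂ hT
  rw [← card_toLeft_add_card_toRight]
  rcases s.toRight.eq_empty_or_nonempty with hR | ⟨j, hj⟩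
  · have := card_le_card hT
    rw [card_product, card_univ, Fintype.card_bool] at this
    rw [hR, card_empty]
    omega
  · have hsub : T ×ˢ {false} ∪ univ ×ˢ {true} ⊆
        ({p | ∃ x ∈ s, dummyAdj adj D x p} : Finset _) := by
      refine union_subset ((product_subset_product_right (subset_univ _)).trans hT) ?_
      intro p hp
      simp only [mem_product, mem_singleton] at hp
      simp only [mem_filter, mem_univ, true_and]
      exact ⟨.inr j, mem_toRight.mp hj, by simp [dummyAdj, hp.2]⟩
    have hdisj : Disjoint (T ×ˢ {false}) (univ ×ˢ {true}) :=
      disjoint_product.mpr (.inr (by simp))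
    have := card_le_card hsub
    rw [card_union_of_disjoint hdisj, card_product, card_product, card_singleton,
      card_singleton, mul_one, mul_one, card_univ] at this
    have := card_le_univ s.toRight
    omega

theorem exists_injective_adj_fst_of_hall
    (hall₂ : ∀ S : Finset A, #S ≤ 2 * #{b | ∃ a ∈ S, adj a b})
    (hall₁ : ∀ S : Finset A, #S + Fintype.card B ≤ #{b | ∃ a ∈ S, adj a b} + Fintype.card A) :
    ∃ g : A → B × Bool, Injective g ∧ (∀ a, adj a (g a).1) ∧ ∀ b, (b, false) ∈ Set.range g := by
  classical
  have hA : Fintype.card A ≤ 2 * Fintype.card B := by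
    simpa using (hall₂ univ).trans (Nat.mul_le_mul_left 2 (card_le_univ _))
  let D := Fin (2 * Fintype.card B - Fintype.card A)
  have hD : Fintype.card A + Fintype.card D = 2 * Fintype.card B := by simp [D]; omega
  obtain ⟨f, hf, hfadj⟩ := (Fintype.all_card_le_filter_rel_iff_exists_injective _).mp
    (card_le_card_dummyAdj_neighbors hD hall₂ hall₁)
  have hbij : Bijective f := (Fintype.bijective_iff_injective_and_card f).mpr
    ⟨hf, by simp [Fintype.card_sum, Fintype.card_prod, hD, mul_comm]⟩
  refine ⟨f ∘ .inl, hf.comp Sum.inl_injective, fun a => hfadj (.inl a), fun b => ?_⟩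
  obtain ⟨x | j, hx⟩ := hbij.2 (b, false)
  · exact ⟨x, hx⟩
  · simpa [dummyAdj, hx] using hfadj (.inr j)

theorem exists_surjective_adj_card_fiber_le_two_of_hall [DecidableEq B]
    (hall₂ : ∀ S : Finset A, #S ≤ 2 * #{b | ∃ a ∈ S, adj a b})
    (hall₁ : ∀ S : Finset A, #S + Fintype.card B ≤ #{b | ∃ a ∈ S, adj a b} + Fintype.card A) :
    ∃ ξ : A → B, Surjective ξ ∧ (∀ a, adj a (ξ a)) ∧
      ∀ b, 1 ≤ #{a | ξ a = b} ∧ #{a | ξ a = b} ≤ 2 := by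
  obtain ⟨g, hg, hadj, hcover⟩ := exists_injective_adj_fst_of_hall hall₂ hall₁
  have hsurj : Surjective (Prod.fst ∘ g) := fun b => (hcover b).imp fun a ha => by simp [ha]
  refine ⟨Prod.fst ∘ g, hsurj, hadj, fun b => ⟨?_, card_fst_comp_fiber_le_two hg b⟩⟩
  obtain ⟨a, ha⟩ := hsurj b
  exact card_pos.mpr ⟨a, by simpa using ha⟩

end

theorem semiregular_sampling_bipartite_general
    {A B : Type*} [Fintype A] [Fintype B] [DecidableEq B]
    (adj : A → B → Prop) [∀ a b, Decidable (adj a b)] (d e r : ℕ)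
    (hr : r = Fintype.card A - Fintype.card B)
    (hdegA : ∀ a : A, (Finset.univ.filter (fun b : B => adj a b)).card = d)
    (hdegB : ∀ b : B, (Finset.univ.filter (fun a : A => adj a b)).card = e)
    (hdeg : r * d > (r - 1) * (e - 1)) :
    ∃ ξ : A → B, Function.Surjective ξ ∧ (∀ a : A, adj a (ξ a)) ∧
      ∀ b : B, 1 ≤ (Finset.univ.filter (fun a : A => ξ a = b)).card ∧
        (Finset.univ.filter (fun a : A => ξ a = b)).card ≤ 2 := by
  obtain ⟨hr₀, hd⟩ := CanonicallyOrderedAdd.mul_pos.mp (Nat.zero_lt_of_lt hdeg)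
  have hcardA : Fintype.card A = Fintype.card B + r := by omega
  have hcount := card_mul_eq_card_mul_of_degrees hdegA hdegB
  have hrB : r ≤ Fintype.card B := le_of_add_mul_eq_mul (hcardA ▸ hcount) hdeg
  have hexpand := card_mul_le_card_neighbors_mul (fun a => (hdegA a).ge) (fun b => (hdegB b).le)
  exact exists_surjective_adj_card_fiber_le_two_of_hall
    (fun S => le_two_mul_of_mul_le hd hcount (by omega) (card_le_univ _) (hexpand S))
    (fun S => add_le_add_of_mul_le hd hcount (by omega) (card_le_univ _) (hexpand S))

/-- The `(1,2)`-semiregular sampling theorem in bipartite form: if `Δ` is a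
finite bipartite graph with parts `A`, `B`, every vertex of `A` of degree `d`,
every vertex of `B` of degree `e`, `d, e > 0`, `|A| > |B|`, `r = |A| - |B|` and
`d > (r-1)(e-1)/r` (stated integrally as `r * d > (r-1) * (e-1)`), then there
is a surjection `ξ : A → B` with `ξ a` adjacent to `a` for all `a`, all of
whose fibres have size one or two. -/
theorem semiregular_sampling_bipartite
    {A B : Type*} [Fintype A] [Fintype B] [DecidableEq A] [DecidableEq B]
    (adj : A → B → Prop) [∀ a b, Decidable (adj a b)] (d e r : ℕ) (hd : 0 < d) (he : 0 < e)
    (hcard : Fintype.card B < Fintype.card A)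
    (hr : r = Fintype.card A - Fintype.card B)
    (hdegA : ∀ a : A, (Finset.univ.filter (fun b : B => adj a b)).card = d)
    (hdegB : ∀ b : B, (Finset.univ.filter (fun a : A => adj a b)).card = e)
    (hdeg : r * d > (r - 1) * (e - 1)) :
    ∃ ξ : A → B, Function.Surjective ξ ∧ (∀ a : A, adj a (ξ a)) ∧
      ∀ b : B, 1 ≤ (Finset.univ.filter (fun a : A => ξ a = b)).card ∧
        (Finset.univ.filter (fun a : A => ξ a = b)).card ≤ 2 :=
  semiregular_sampling_bipartite_general adj d e r hr hdegA hdegB hdeg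
end

section
/- Let S be a finite set with |S| = n, and let k' ≤ k ≤ n, with λ = ⌊C(n,k)/C(n,k')⌋. Then there exists a map ξ from the k-subsets of S to the k'-subsets of S with ξ(A) ⊆ A for every A, such that every k'-subset of S has at least λ preimages under ξ. -/
/-!
Take each `k'`-subset `B` of `S` with multiplicity `l` and match the copies, by Hall's theorem, to
distinct `k`-subsets containing `B`; `ξ` sends every matched `k`-subset back to its `B`.
Hall's condition is a double count in the inclusion graph: every `k'`-subset lies in
`C(n - k', k - k')` of the `k`-subsets and every `k`-subset contains `C(k, k')` of the `k'`-subsets,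
so by `C(n, k) C(k, k') = C(n, k') C(n - k', k - k')` a family of `t` subsets of size `k'` has at
least `t C(n, k) / C(n, k') ≥ t l` supersets of size `k`.
-/

open Finset Function

namespace Finset

variable {α : Type*}

section

variable [DecidableEq α]

theorem exists_injective_prod_fin_of_forall_card_mul_le {ι : Type*} (t : ι → Finset α) (l : ℕ)
    (h : ∀ s : Finset ι, #s * l ≤ #(s.biUnion t)) :
    ∃ f : ι × Fin l → α, Injective f ∧ ∀ x, f x ∈ t x.1 := by
  classical
  refine (all_card_le_biUnion_card_iff_exists_injective (t ∘ Prod.fst)).1 fun s => ?_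
  have fiber_card_le (i : ι) : #{x ∈ s | x.1 = i} ≤ l := by
    calc #{x ∈ s | x.1 = i} ≤ #(univ : Finset (Fin l)) :=
          card_le_card_of_injOn Prod.snd (fun _ _ => mem_coe.2 (mem_univ _))
            fun x hx y hy hxy => Prod.ext ((mem_filter.1 hx).2.trans (mem_filter.1 hy).2.symm) hxy
      _ = l := by simp
  calc #s ≤ l * #(s.image Prod.fst) := card_le_mul_card_image s l fun i _ => fiber_card_le i
    _ = #(s.image Prod.fst) * l := mul_comm _ _
    _ ≤ #((s.image Prod.fst).biUnion t) := h _
    _ = #(s.biUnion (t ∘ Prod.fst)) := by rw [image_biUnion]; rfl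

theorem card_mul_choose_le_card_biUnion_supersets_mul_choose {S : Finset α} {k k' : ℕ}
    (hk' : k' ≤ k) {𝒯 : Finset (Finset α)} (h𝒯 : 𝒯 ⊆ S.powersetCard k') :
    #𝒯 * (#S - k').choose (k - k') ≤
      #(𝒯.biUnion fun B => {A ∈ S.powersetCard k | B ⊆ A}) * k.choose k' := by
  refine card_mul_le_card_mul (· ⊆ ·) (fun B hB => ?_) fun A hA => ?_
  · obtain ⟨hBS, hBk'⟩ := mem_powersetCard.1 (h𝒯 hB)
    rw [← hBk', ← card_filter_powersetCard_subset B S k hBS (hBk' ▸ hk')]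
    exact card_le_card fun A hA => mem_filter.2 ⟨mem_biUnion.2 ⟨B, hB, hA⟩, (mem_filter.1 hA).2⟩
  · obtain ⟨B, -, hA⟩ := mem_biUnion.1 hA
    rw [← (mem_powersetCard.1 (mem_filter.1 hA).1).2, ← card_powersetCard]
    refine card_le_card fun C hC => ?_
    obtain ⟨hC𝒯, hCA⟩ := mem_filter.1 hC
    exact mem_powersetCard.2 ⟨hCA, (mem_powersetCard.1 (h𝒯 hC𝒯)).2⟩

theorem card_mul_le_card_biUnion_supersets {S : Finset α} {k k' l : ℕ} (hk' : k' ≤ k)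
    (hk'S : k' ≤ #S) (hl : l * (#S).choose k' ≤ (#S).choose k) {𝒯 : Finset (Finset α)}
    (h𝒯 : 𝒯 ⊆ S.powersetCard k') :
    #𝒯 * l ≤ #(𝒯.biUnion fun B => {A ∈ S.powersetCard k | B ⊆ A}) := by
  have hpos : 0 < (#S).choose k' * k.choose k' :=
    mul_pos (Nat.choose_pos hk'S) (Nat.choose_pos hk')
  refine Nat.le_of_mul_le_mul_right ?_ hpos
  calc #𝒯 * l * ((#S).choose k' * k.choose k')
      = #𝒯 * (l * (#S).choose k') * k.choose k' := by ring
    _ ≤ #𝒯 * (#S).choose k * k.choose k' := by gcongr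
    _ = #𝒯 * (#S - k').choose (k - k') * (#S).choose k' := by
      rw [mul_assoc, Nat.choose_mul hk']; ring
    _ ≤ #(𝒯.biUnion fun B => {A ∈ S.powersetCard k | B ⊆ A}) * k.choose k' * (#S).choose k' :=
      Nat.mul_le_mul_right _ <| card_mul_choose_le_card_biUnion_supersets_mul_choose hk' h𝒯
    _ = _ := by ring

end

theorem exists_subset_card_eq_extend {ι : Type*} {f : ι → Finset α}
    (hf : Injective f) {k' : ℕ} (c : ι → Finset α) (hc : ∀ i, c i ⊆ f i ∧ #(c i) = k') :
    ∃ ξ : Finset α → Finset α, (∀ A, k' ≤ #A → ξ A ⊆ A ∧ #(ξ A) = k') ∧ ∀ i, ξ (f i) = c i := by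
  let fallback (A : Finset α) : Finset α := Classical.epsilon fun B => B ⊆ A ∧ #B = k'
  refine ⟨extend f c fallback, fun A hA => ?_, hf.extend_apply c fallback⟩
  by_cases hAf : ∃ i, f i = A
  · obtain ⟨i, rfl⟩ := hAf
    rw [hf.extend_apply]
    exact hc i
  · rw [extend_apply' _ _ _ hAf]
    exact Classical.epsilon_spec (exists_subset_card_eq hA)

end Finset

/-- Let `|S| = n`, `k' ≤ k ≤ n`, and `l = ⌊C(n,k)/C(n,k')⌋`.  Then there is a
sampling `ξ` from the `k`-subsets of `S` to the `k'`-subsets of `S` (with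
`ξ A ⊆ A`) such that every `k'`-subset has at least `l` preimages. -/
theorem sampling_with_floor_redundancy {α : Type*} [DecidableEq α]
    (S : Finset α) (n k k' l : ℕ) (hS : S.card = n) (hk' : k' ≤ k) (hk : k ≤ n)
    (hl : l = n.choose k / n.choose k') :
    ∃ ξ : Finset α → Finset α,
      (∀ A ∈ S.powersetCard k, ξ A ⊆ A ∧ (ξ A).card = k') ∧
      (∀ B ∈ S.powersetCard k',
        l ≤ ((S.powersetCard k).filter (fun A => ξ A = B)).card) := by
  subst hS
  let supersets (B : S.powersetCard k') : Finset (Finset α) := {A ∈ S.powersetCard k | B.1 ⊆ A}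
  have hall (s : Finset (S.powersetCard k')) : #s * l ≤ #(s.biUnion supersets) := by
    have := card_mul_le_card_biUnion_supersets hk' (hk'.trans hk) (hl ▸ Nat.div_mul_le_self _ _)
      (map_subtype_subset s)
    rwa [card_map, map_eq_image, image_biUnion] at this
  obtain ⟨f, hf, hf_mem⟩ := exists_injective_prod_fin_of_forall_card_mul_le supersets l hall
  have hsub (p : S.powersetCard k' × Fin l) : p.1.1 ⊆ f p ∧ #p.1.1 = k' :=
    ⟨(mem_filter.1 (hf_mem p)).2, (mem_powersetCard.1 p.1.2).2⟩
  obtain ⟨ξ, hξ, hξf⟩ := exists_subset_card_eq_extend hf (fun p => p.1.1) hsub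
  refine ⟨ξ, fun A hA => hξ A ((mem_powersetCard.1 hA).2 ▸ hk'), fun B hB => ?_⟩
  calc _ = #(univ : Finset (Fin l)) := by simp
    _ ≤ _ := card_le_card_of_injOn (fun i => f (⟨B, hB⟩, i))
      (fun i _ => mem_filter.2 ⟨(mem_filter.1 (hf_mem _)).1, hξf _⟩)
      fun i _ j _ hij => (Prod.ext_iff.1 (hf hij)).2
end

section
/- Let S be a finite set with |S| = n and suppose C(n,k) = λ·C(n,k') + 1 for some natural numbers λ ≥ 1 and k' ≤ k ≤ n. Then there exists a sampling ξ from the k-subsets to the k'-subsets of S (ξ(A) ⊆ A) in which every k'-subset has either λ or λ + 1 preimages. -/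
/-! Give every `k'`-set `l` slots and one distinguished `k'`-set an extra slot, `C(n,k)` slots in
all, and match the `k`-sets to slots of their subsets by Hall's theorem. Hall's condition comes from
the normalized matching property `|𝒜| C(n,k') ≤ |∂𝒜| C(n,k)` of the containment order (double
counting): if the shadow `∂𝒜` misses some `k'`-set, then `|𝒜| C(n,k') ≤ l |∂𝒜| C(n,k') + |∂𝒜|`
with `|∂𝒜| < C(n,k')`, so `|𝒜| ≤ l |∂𝒜|`; otherwise every slot is available. As there are exactly as many slots as
`k`-sets, the matching fills every slot, so each fibre has `l` or `l + 1` elements. -/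

open Finset

namespace Finset

variable {α β : Type*} [DecidableEq β]

theorem fiber_card_eq_of_le_of_sum_eq {X : Finset α} {Y : Finset β} {ξ : α → β} {c : β → ℕ}
    (hξ : ∀ a ∈ X, ξ a ∈ Y) (hle : ∀ b ∈ Y, #{a ∈ X | ξ a = b} ≤ c b)
    (hsum : ∑ b ∈ Y, c b = #X) : ∀ b ∈ Y, #{a ∈ X | ξ a = b} = c b :=
  (sum_eq_sum_iff_of_le hle).1 (by rw [hsum, card_eq_sum_card_fiberwise hξ])

theorem exists_fiber_card_le_of_hall [Nonempty β] (X : Finset α) (Y : Finset β)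
    (r : α → β → Prop) [DecidableRel r] (c : β → ℕ)
    (hall : ∀ 𝒜 ⊆ X, #𝒜 ≤ ∑ b ∈ Y with ∃ a ∈ 𝒜, r a b, c b) :
    ∃ ξ : α → β, (∀ a ∈ X, ξ a ∈ Y ∧ r a (ξ a)) ∧ ∀ b ∈ Y, #{a ∈ X | ξ a = b} ≤ c b := by
  classical
  let slots (a : X) : Finset (Σ _ : β, ℕ) := {b ∈ Y | r a b}.sigma fun b ↦ range (c b)
  have hslots (s : Finset X) : #s ≤ #(s.biUnion slots) := by
    have hs : s.biUnion slots
        = {b ∈ Y | ∃ a ∈ s.map (.subtype _), r a b}.sigma fun b ↦ range (c b) := by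
      ext ⟨b, i⟩
      simp only [slots, mem_biUnion, mem_sigma, mem_filter, mem_map,
        Function.Embedding.subtype_apply]
      grind
    rw [hs, card_sigma]
    simpa using hall (s.map (.subtype _)) fun a ha ↦ by
      obtain ⟨a', -, rfl⟩ := mem_map.1 ha
      exact a'.2
  obtain ⟨f, hf_inj, hf_mem⟩ := (all_card_le_biUnion_card_iff_exists_injective slots).1 hslots
  have hf (a : X) : (f a).1 ∈ Y ∧ r a (f a).1 ∧ (f a).2 < c (f a).1 := by
    simpa [slots, and_assoc] using hf_mem a
  let ξ a := if ha : a ∈ X then (f ⟨a, ha⟩).1 else Classical.arbitrary β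
  have hξ (a : X) : ξ a = (f a).1 := dif_pos a.2
  refine ⟨ξ, fun a ha ↦ hξ ⟨a, ha⟩ ▸ ⟨(hf ⟨a, ha⟩).1, (hf ⟨a, ha⟩).2.1⟩, fun b _ ↦ ?_⟩
  -- distinct elements of a fibre occupy distinct slots `(b, i)`, so the slot index is injective
  let slot a := if ha : a ∈ X then (f ⟨a, ha⟩).2 else 0
  calc #{a ∈ X | ξ a = b} ≤ #(range (c b)) := by
        refine card_le_card_of_injOn slot (fun a ha ↦ ?_) fun a₁ ha₁ a₂ ha₂ h ↦ ?_
        · obtain ⟨hX, rfl⟩ := mem_filter.1 ha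
          simpa [slot, hX, hξ ⟨a, hX⟩] using (hf ⟨a, hX⟩).2.2
        · obtain ⟨hX₁, rfl⟩ := mem_filter.1 ha₁
          obtain ⟨hX₂, hb⟩ := mem_filter.1 ha₂
          rw [hξ ⟨a₁, hX₁⟩, hξ ⟨a₂, hX₂⟩] at hb
          simp only [slot, dif_pos hX₁, dif_pos hX₂] at h
          exact congrArg Subtype.val (hf_inj (Sigma.ext hb.symm (heq_of_eq h)))
    _ = c b := card_range _

theorem exists_fiber_card_eq_or_eq_succ_of_card_eq_mul_add_one (X : Finset α) (Y : Finset β)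
    (r : α → β → Prop) [DecidableRel r] (l : ℕ) (hY : Y.Nonempty) (hcard : #X = l * #Y + 1)
    (hmatch : ∀ 𝒜 ⊆ X, #𝒜 * #Y ≤ #{b ∈ Y | ∃ a ∈ 𝒜, r a b} * #X) :
    ∃ ξ : α → β, (∀ a ∈ X, ξ a ∈ Y ∧ r a (ξ a)) ∧
      ∀ b ∈ Y, #{a ∈ X | ξ a = b} = l ∨ #{a ∈ X | ξ a = b} = l + 1 := by
  obtain ⟨b₀, hb₀⟩ := hY
  have : Nonempty β := ⟨b₀⟩
  -- the extra capacity at `b₀` absorbs the remainder `1`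
  let c b := l + if b = b₀ then 1 else 0
  have hsum_ge (ℬ : Finset β) : l * #ℬ ≤ ∑ b ∈ ℬ, c b := by
    rw [mul_comm, ← smul_eq_mul, ← sum_const]
    exact sum_le_sum fun b _ ↦ Nat.le_add_right _ _
  have hsum : ∑ b ∈ Y, c b = #X := by
    rw [sum_add_distrib, sum_const, smul_eq_mul, sum_ite_eq' Y b₀, if_pos hb₀, hcard, mul_comm]
  have hall : ∀ 𝒜 ⊆ X, #𝒜 ≤ ∑ b ∈ Y with ∃ a ∈ 𝒜, r a b, c b := by
    intro 𝒜 h𝒜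
    set ℬ := {b ∈ Y | ∃ a ∈ 𝒜, r a b}
    by_cases hfull : ℬ = Y
    · rw [hfull, hsum]
      exact card_le_card h𝒜
    · have hlt : #ℬ < #Y := card_lt_card ((filter_subset _ _).ssubset_of_ne hfull)
      have : #𝒜 * #Y < (l * #ℬ + 1) * #Y := calc
        #𝒜 * #Y ≤ #ℬ * (l * #Y + 1) := hcard ▸ hmatch 𝒜 h𝒜
        _ = l * #ℬ * #Y + #ℬ := by ring
        _ < (l * #ℬ + 1) * #Y := by rw [add_mul, one_mul]; exact Nat.add_lt_add_left hlt _
      exact Nat.le_of_lt_succ (Nat.lt_of_mul_lt_mul_right this) |>.trans (hsum_ge ℬ)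
  obtain ⟨ξ, hξ, hle⟩ := exists_fiber_card_le_of_hall X Y r c hall
  refine ⟨ξ, hξ, fun b hb ↦ ?_⟩
  rw [fiber_card_eq_of_le_of_sum_eq (fun a ha ↦ (hξ a ha).1) hle hsum b hb]
  by_cases b = b₀ <;> simp [c, *]

theorem card_mul_choose_le_card_shadow_mul_choose [DecidableEq α] {S : Finset α} {k k' : ℕ}
    (hk' : k' ≤ k) {𝒜 : Finset (Finset α)} (h𝒜 : 𝒜 ⊆ S.powersetCard k) :
    #𝒜 * (#S).choose k' ≤ #{B ∈ S.powersetCard k' | ∃ A ∈ 𝒜, B ⊆ A} * (#S).choose k := by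
  set ℬ := {B ∈ S.powersetCard k' | ∃ A ∈ 𝒜, B ⊆ A}
  have hpairs : #𝒜 * k.choose k' ≤ #ℬ * (#S - k').choose (k - k') := by
    refine card_mul_le_card_mul (fun A B ↦ B ⊆ A) (fun A hA ↦ ?_) fun B hB ↦ ?_
    · obtain ⟨hAS, hAk⟩ := mem_powersetCard.1 (h𝒜 hA)
      rw [← hAk, ← card_powersetCard]
      refine card_le_card fun B hB ↦ ?_
      have hBA := (mem_powersetCard.1 hB).1
      exact mem_filter.2 ⟨mem_filter.2 ⟨powersetCard_mono hAS hB, A, hA, hBA⟩, hBA⟩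
    · obtain ⟨hBS, hBk⟩ := mem_powersetCard.1 (mem_filter.1 hB).1
      rw [← hBk, ← card_filter_powersetCard_subset B S k hBS (hBk ▸ hk')]
      exact card_le_card (filter_subset_filter _ h𝒜)
  refine Nat.le_of_mul_le_mul_right ?_ (Nat.choose_pos hk')
  calc #𝒜 * (#S).choose k' * k.choose k'
      = #𝒜 * k.choose k' * (#S).choose k' := by ring
    _ ≤ #ℬ * (#S - k').choose (k - k') * (#S).choose k' := Nat.mul_le_mul_right _ hpairs
    _ = #ℬ * ((#S).choose k * k.choose k') := by rw [Nat.choose_mul hk']; ring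
    _ = #ℬ * (#S).choose k * k.choose k' := by ring

end Finset

theorem semiregular_sampling_remainder_one_general {α : Type*} [DecidableEq α]
    (S : Finset α) (n k k' l : ℕ) (hS : S.card = n)
    (hk' : k' ≤ k) (hk : k ≤ n) (h : n.choose k = l * n.choose k' + 1) :
    ∃ ξ : Finset α → Finset α,
      (∀ A ∈ S.powersetCard k, ξ A ⊆ A ∧ (ξ A).card = k') ∧
      (∀ B ∈ S.powersetCard k',
        ((S.powersetCard k).filter (fun A => ξ A = B)).card = l ∨
        ((S.powersetCard k).filter (fun A => ξ A = B)).card = l + 1) := by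
  subst hS
  obtain ⟨ξ, hξ, hfibre⟩ := exists_fiber_card_eq_or_eq_succ_of_card_eq_mul_add_one
    (S.powersetCard k) (S.powersetCard k') (fun A B ↦ B ⊆ A) l
    (powersetCard_nonempty.2 (hk'.trans hk)) (by simpa only [card_powersetCard] using h)
    fun 𝒜 h𝒜 ↦ by
      simpa only [card_powersetCard] using card_mul_choose_le_card_shadow_mul_choose hk' h𝒜
  exact ⟨ξ, fun A hA ↦ ⟨(hξ A hA).2, (mem_powersetCard.1 (hξ A hA).1).2⟩, hfibre⟩

/-- If `C(n,k) = l * C(n,k') + 1` with `l ≥ 1`, `k' ≤ k ≤ n`, `|S| = n`, then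
there is a `(l, l+1)`-semiregular sampling from the `k`-subsets to the
`k'`-subsets of `S`: every `k'`-subset has either `l` or `l + 1` preimages. -/
theorem semiregular_sampling_remainder_one {α : Type*} [DecidableEq α]
    (S : Finset α) (n k k' l : ℕ) (hS : S.card = n) (hl : 1 ≤ l)
    (hk' : k' ≤ k) (hk : k ≤ n) (h : n.choose k = l * n.choose k' + 1) :
    ∃ ξ : Finset α → Finset α,
      (∀ A ∈ S.powersetCard k, ξ A ⊆ A ∧ (ξ A).card = k') ∧
      (∀ B ∈ S.powersetCard k',
        ((S.powersetCard k).filter (fun A => ξ A = B)).card = l ∨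
        ((S.powersetCard k).filter (fun A => ξ A = B)).card = l + 1) :=
  semiregular_sampling_remainder_one_general S n k k' l hS hk' hk h
end
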